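/- Let h > 0 and c > 0 be real constants. The function f(μ, b) = (μ / h) · (exp(c · b / μ) − 1) is jointly convex on the set {(μ, b) ∈ ℝ × ℝ : μ > 0 and b ≥ 0}; formally, ConvexOn ℝ {p : ℝ × ℝ | 0 < p.1 ∧ 0 ≤ p.2} (fun p => (p.1 / h) * (Real.exp (c * p.2 / p.1) - 1)). -/

import Mathlib

/-! The summand is `1/h` times the perspective `(μ, b) ↦ μ • g (μ⁻¹ • b)` of the convex function
`g y = exp (c y) - 1`, and perspectives of convex functions are convex: with `t = a t₁ + b t₂`, the
point `t⁻¹ • (a x₁ + b x₂)` is the convex combination of `t₁⁻¹ • x₁` and `t₂⁻¹ • x₂` with weights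
`a t₁ / t` and `b t₂ / t`, so Jensen for `g`, multiplied by `t`, is Jensen for the perspective. -/

open Set

section Perspective

variable {E : Type*} [AddCommGroup E] [Module ℝ E]

theorem inv_smul_add_eq_add_smul_inv_smul {t₁ t₂ : ℝ} (ht₁ : t₁ ≠ 0) (ht₂ : t₂ ≠ 0)
    (a b : ℝ) (x₁ x₂ : E) :
    (a * t₁ + b * t₂)⁻¹ • (a • x₁ + b • x₂) =
      (a * t₁ / (a * t₁ + b * t₂)) • (t₁⁻¹ • x₁) + (b * t₂ / (a * t₁ + b * t₂)) • (t₂⁻¹ • x₂) := by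
  simp only [smul_smul, smul_add]
  congr 2 <;> field_simp

theorem ConvexOn.perspective
    {β : Type*} [AddCommGroup β] [PartialOrder β] [IsOrderedAddMonoid β]
    [Module ℝ β] [PosSMulMono ℝ β]
    {s : Set E} {g : E → β} (hg : ConvexOn ℝ s g) :
    ConvexOn ℝ {p : ℝ × E | 0 < p.1 ∧ p.1⁻¹ • p.2 ∈ s} (fun p => p.1 • g (p.1⁻¹ • p.2)) := by
  have hweights : ∀ ⦃t₁ t₂ a b : ℝ⦄, 0 < t₁ → 0 < t₂ → 0 ≤ a → 0 ≤ b → a + b = 1 →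
      0 < a * t₁ + b * t₂ ∧ 0 ≤ a * t₁ / (a * t₁ + b * t₂) ∧ 0 ≤ b * t₂ / (a * t₁ + b * t₂) ∧
        a * t₁ / (a * t₁ + b * t₂) + b * t₂ / (a * t₁ + b * t₂) = 1 := by
    intro t₁ t₂ a b ht₁ ht₂ ha hb hab
    have ht : 0 < a * t₁ + b * t₂ := convex_Ioi (0 : ℝ) ht₁ ht₂ ha hb hab
    exact ⟨ht, by positivity, by positivity, by field_simp⟩
  refine ⟨?_, ?_⟩
  · rintro ⟨t₁, x₁⟩ ⟨ht₁, hx₁⟩ ⟨t₂, x₂⟩ ⟨ht₂, hx₂⟩ a b ha hb hab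
    obtain ⟨ht, hθ₁, hθ₂, hθ⟩ := hweights ht₁ ht₂ ha hb hab
    refine ⟨ht, ?_⟩
    simp only [Prod.smul_mk, Prod.mk_add_mk, smul_eq_mul]
    rw [inv_smul_add_eq_add_smul_inv_smul ht₁.ne' ht₂.ne']
    exact hg.1 hx₁ hx₂ hθ₁ hθ₂ hθ
  · rintro ⟨t₁, x₁⟩ ⟨ht₁, hx₁⟩ ⟨t₂, x₂⟩ ⟨ht₂, hx₂⟩ a b ha hb hab
    obtain ⟨ht, hθ₁, hθ₂, hθ⟩ := hweights ht₁ ht₂ ha hb hab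
    simp only [Prod.smul_mk, Prod.mk_add_mk, smul_eq_mul]
    rw [inv_smul_add_eq_add_smul_inv_smul ht₁.ne' ht₂.ne']
    calc _ ≤ (a * t₁ + b * t₂) • ((a * t₁ / (a * t₁ + b * t₂)) • g (t₁⁻¹ • x₁)
            + (b * t₂ / (a * t₁ + b * t₂)) • g (t₂⁻¹ • x₂)) :=
          smul_le_smul_of_nonneg_left (hg.2 hx₁ hx₂ hθ₁ hθ₂ hθ) ht.le
      _ = a • (t₁ • g (t₁⁻¹ • x₁)) + b • (t₂ • g (t₂⁻¹ • x₂)) := by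
          simp only [smul_add, smul_smul, mul_div_cancel₀ _ ht.ne']

end Perspective

theorem transformed_power_summand_convex_general (h c : ℝ) (hh : 0 < h) :
    ConvexOn ℝ {p : ℝ × ℝ | 0 < p.1 ∧ 0 ≤ p.2}
      (fun p => (p.1 / h) * (Real.exp (c * p.2 / p.1) - 1)) := by
  have hexp : ConvexOn ℝ univ (fun y : ℝ => Real.exp (c * y)) :=
    convexOn_exp.comp_linearMap (LinearMap.mulLeft ℝ c)
  have hg : ConvexOn ℝ univ (fun y : ℝ => h⁻¹ * (Real.exp (c * y) - 1)) :=
    (hexp.add_const (-1)).smul (inv_nonneg.2 hh.le)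
  have hdom : Convex ℝ {p : ℝ × ℝ | 0 < p.1 ∧ 0 ≤ p.2} := (convex_Ioi 0).prod (convex_Ici 0)
  refine (hg.perspective.subset (fun p hp => ⟨hp.1, mem_univ _⟩) hdom).congr fun p _ => ?_
  simp only [smul_eq_mul]
  rw [mul_div_assoc, div_eq_inv_mul p.2]
  ring

theorem transformed_power_summand_convex (h c : ℝ) (hh : 0 < h) (hc : 0 < c) :
    ConvexOn ℝ {p : ℝ × ℝ | 0 < p.1 ∧ 0 ≤ p.2}
      (fun p => (p.1 / h) * (Real.exp (c * p.2 / p.1) - 1)) :=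
  transformed_power_summand_convex_general h c hh
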